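/- arXiv:1304.7639 — 2 statements merged into one kernel-verified Lean document; each statement's English description precedes it below -/
import Mathlib

section
/- Let p, q ∈ (1, ∞) satisfy 1/p + 1/3 = 1 + 1/q. Then there exists a constant N_p > 0, depending only on p, such that for every f ∈ L^p(ℝ³), the convolution of f with the kernel x ↦ 1/|x| satisfies ‖ (1/|·|) * f ‖_{L^q(ℝ³)} ≤ N_p ‖f‖_{L^p(ℝ³)}. -/
open MeasureTheory

noncomputable section

local notation "E3" => EuclideanSpace ℝ (Fin 3)

/-!
Hedberg's argument. Split the potential `I g(x) = ∫ g(y) |x - y|^(-γ) dy` at a radius `R`. On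
the ball `B(x, R)` a dyadic decomposition bounds it by `R^(d-γ) Mg(x)`, where `M` is the
Hardy–Littlewood maximal function; off the ball Hölder's inequality bounds it by
`R^(-d/q) ‖g‖_p`. Optimising in `R` gives `I g(x) ≲ Mg(x)^(p/q) ‖g‖_p^(1-p/q)`, and the strong
type `(p, p)` of `M` (from its weak type `(1, 1)`, i.e. the Vitali covering lemma, and the layer
cake formula) turns this into `‖I g‖_q ≲ ‖g‖_p`. The Newtonian kernel is the case `d = 3`,
`γ = 1`.
-/

open Metric Set Filter Topology Module
open scoped ENNReal

section LayerCake

lemma lintegral_Ioo_rpow {r : ℝ} (hr : -1 < r) {c : ℝ} (hc : 0 ≤ c) :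
    ∫⁻ t in Ioo 0 c, ENNReal.ofReal (t ^ r) = ENNReal.ofReal (c ^ (r + 1) / (r + 1)) := by
  rw [← ofReal_integral_eq_lintegral_ofReal
      ((intervalIntegrable_iff_integrableOn_Ioo_of_le hc).mp
        (intervalIntegral.intervalIntegrable_rpow' hr))
      ((ae_restrict_iff' measurableSet_Ioo).mpr
        (.of_forall fun t ht ↦ Real.rpow_nonneg ht.1.le r)),
    ← integral_Ioc_eq_integral_Ioo, ← intervalIntegral.integral_of_le hc,
    integral_rpow (.inl hr), Real.zero_rpow (by linarith), sub_zero]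

lemma lintegral_Ioi_rpow (r : ℝ) : ∫⁻ t in Ioi (0 : ℝ), ENNReal.ofReal (t ^ r) = ∞ := by
  by_contra h
  refine not_integrableOn_Ioi_rpow r ⟨by fun_prop, ?_⟩
  rw [hasFiniteIntegral_iff_ofReal ((ae_restrict_iff' measurableSet_Ioi).mpr
    (.of_forall fun t ht ↦ Real.rpow_nonneg (le_of_lt ht) r))]
  exact lt_top_iff_ne_top.mpr h

lemma lintegral_Ioi_indicator_rpow {r : ℝ} (hr : -1 < r) (a : ℝ≥0∞) :
    ∫⁻ t in Ioi (0 : ℝ),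
        {t : ℝ | ENNReal.ofReal t < a}.indicator (fun t ↦ ENNReal.ofReal (t ^ r)) t
      = a ^ (r + 1) / ENNReal.ofReal (r + 1) := by
  have hr1 : 0 < r + 1 := by linarith
  rw [lintegral_indicator (measurableSet_lt (by fun_prop) measurable_const),
    Measure.restrict_restrict (measurableSet_lt (by fun_prop) measurable_const)]
  rcases eq_or_ne a ∞ with rfl | ha
  · simp [lintegral_Ioi_rpow, ENNReal.top_rpow_of_pos hr1, ENNReal.top_div_of_ne_top]
  have hset : {t : ℝ | ENNReal.ofReal t < a} ∩ Ioi 0 = Ioo 0 a.toReal := by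
    ext t
    simp only [mem_inter_iff, mem_Ioi, mem_Ioo]
    exact ⟨fun ⟨h, h0⟩ ↦ ⟨h0, (ENNReal.ofReal_lt_iff_lt_toReal h0.le ha).mp h⟩,
      fun ⟨h0, h⟩ ↦ ⟨(ENNReal.ofReal_lt_iff_lt_toReal h0.le ha).mpr h, h0⟩⟩
  rw [hset, lintegral_Ioo_rpow hr ENNReal.toReal_nonneg, ENNReal.ofReal_div_of_pos hr1,
    ← ENNReal.ofReal_rpow_of_nonneg ENNReal.toReal_nonneg hr1.le, ENNReal.ofReal_toReal ha]

lemma lintegral_rpow_eq_lintegral_meas_lt_mul_of_ennreal {α : Type*} [MeasurableSpace α]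
    (μ : Measure α) [SFinite μ] {F : α → ℝ≥0∞} (hF : Measurable F) {p : ℝ} (hp : 0 < p) :
    ∫⁻ x, F x ^ p ∂μ = ENNReal.ofReal p *
      ∫⁻ t in Ioi 0, μ {x | ENNReal.ofReal t < F x} * ENNReal.ofReal (t ^ (p - 1)) := by
  have hpow (a : ℝ≥0∞) : a ^ p = ENNReal.ofReal p * ∫⁻ t in Ioi (0 : ℝ),
      {t : ℝ | ENNReal.ofReal t < a}.indicator (fun t ↦ ENNReal.ofReal (t ^ (p - 1))) t := by
    rw [lintegral_Ioi_indicator_rpow (by linarith), sub_add_cancel,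
      ENNReal.mul_div_cancel (by simpa using hp) ENNReal.ofReal_ne_top]
  simp_rw [hpow]
  rw [lintegral_const_mul' _ _ ENNReal.ofReal_ne_top, lintegral_lintegral_swap]
  · congr 1
    refine setLIntegral_congr_fun measurableSet_Ioi fun t _ ↦ ?_
    rw [mul_comm, ← lintegral_indicator_const (measurableSet_lt measurable_const hF)]
    rfl
  · refine Measurable.aemeasurable (Measurable.ite ?_ (by fun_prop) measurable_const)
    exact measurableSet_lt (by fun_prop) (hF.comp measurable_fst)

lemma lintegral_Ioi_indicator_mul_rpow {p : ℝ} (hp : 1 < p) (a : ℝ≥0∞) :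
    ∫⁻ t in Ioi (0 : ℝ), {t : ℝ | ENNReal.ofReal t < 2 * a}.indicator (fun _ ↦ a) t *
        ENNReal.ofReal (t ^ (p - 2))
      = 2 ^ (p - 1) / ENNReal.ofReal (p - 1) * a ^ p := by
  have hind (t : ℝ) : {t : ℝ | ENNReal.ofReal t < 2 * a}.indicator (fun _ ↦ a) t *
      ENNReal.ofReal (t ^ (p - 2)) = a * {t : ℝ | ENNReal.ofReal t < 2 * a}.indicator
        (fun t ↦ ENNReal.ofReal (t ^ (p - 2))) t := by
    by_cases h : ENNReal.ofReal t < 2 * a <;> simp [h]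
  simp_rw [hind]
  rw [lintegral_const_mul _ ((by fun_prop : Measurable fun t : ℝ ↦
      ENNReal.ofReal (t ^ (p - 2))).indicator (measurableSet_lt (by fun_prop) measurable_const)),
    lintegral_Ioi_indicator_rpow (by linarith), show p - 2 + 1 = p - 1 by ring,
    ENNReal.mul_rpow_of_nonneg _ _ (by linarith),
    show a ^ p = a * a ^ (p - 1) by
      simpa using ENNReal.rpow_add_of_nonneg (x := a) 1 (p - 1) zero_le_one (by linarith),
    div_eq_mul_inv, div_eq_mul_inv]
  ring

end LayerCake

section Exponents

lemma Real.div_two_pow_rpow {R : ℝ} (hR : 0 ≤ R) (k : ℕ) (z : ℝ) :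
    (R / 2 ^ k) ^ z = R ^ z * (2 ^ (-z)) ^ k := by
  rw [Real.div_rpow hR (by positivity), ← Real.rpow_natCast_mul zero_le_two, mul_comm,
    Real.rpow_mul_natCast zero_le_two, Real.rpow_neg zero_le_two, inv_pow, div_eq_mul_inv]

lemma Real.mul_two_pow_rpow {R : ℝ} (hR : 0 ≤ R) (k : ℕ) (z : ℝ) :
    (R * 2 ^ k) ^ z = R ^ z * (2 ^ z) ^ k := by
  rw [Real.mul_rpow hR (by positivity), ← Real.rpow_natCast_mul zero_le_two, mul_comm (k : ℝ),
    Real.rpow_mul_natCast zero_le_two]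

lemma ENNReal.div_rpow_mul_self {X : ℝ≥0∞} (Y : ℝ≥0∞) (hX₀ : X ≠ 0) (hX : X ≠ ∞) {s : ℝ}
    (hs : 0 ≤ s) : (Y / X) ^ s * X = X ^ (1 - s) * Y ^ s := by
  rw [ENNReal.div_rpow_of_nonneg _ _ hs, div_eq_mul_inv, ← ENNReal.rpow_neg, sub_eq_neg_add,
    ENNReal.rpow_add _ _ hX₀ hX, ENNReal.rpow_one]
  ring

theorem le_mul_rpow_mul_rpow_of_forall_le {F A B C₁ C₂ : ℝ≥0∞} {a b : ℝ} (ha : 0 < a)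
    (hb : 0 < b) (hC₂ : C₂ ≠ ∞) (hB₀ : B ≠ 0) (hB : B ≠ ∞)
    (h : ∀ R : ℝ, 0 < R →
      F ≤ C₁ * ENNReal.ofReal (R ^ a) * A + C₂ * ENNReal.ofReal (R ^ (-b)) * B) :
    F ≤ (C₁ + C₂) * A ^ (b / (a + b)) * B ^ (a / (a + b)) := by
  have hab : 0 < a + b := add_pos ha hb
  rcases eq_or_ne A 0 with rfl | hA₀
  · have hlim : Tendsto (fun R : ℝ ↦ C₂ * ENNReal.ofReal (R ^ (-b)) * B) atTop (𝓝 0) := by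
      simpa using ENNReal.Tendsto.mul_const (ENNReal.Tendsto.const_mul
        (ENNReal.tendsto_ofReal (tendsto_rpow_neg_atTop hb)) (.inr hC₂)) (.inr hB)
    refine (ge_of_tendsto hlim ((eventually_gt_atTop 0).mono fun R hR ↦ ?_)).trans zero_le
    simpa using h R hR
  rcases eq_or_ne A ∞ with rfl | hA
  · rcases eq_or_ne (C₁ + C₂) 0 with hC | hC
    · obtain ⟨rfl, rfl⟩ := add_eq_zero.mp hC
      simpa using h 1 one_pos
    rw [ENNReal.top_rpow_of_pos (by positivity), ENNReal.mul_top hC,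
      ENNReal.top_mul (ENNReal.rpow_pos (pos_iff_ne_zero.mpr hB₀) hB).ne']
    exact le_top
  -- the optimal radius balances the two terms: `R ^ (a + b) = B / A`
  set ρ := B / A
  have hρ : ρ ≠ ∞ := ENNReal.div_ne_top hB hA₀
  have hρ₀ : 0 < ρ.toReal := ENNReal.toReal_pos (ENNReal.div_pos hB₀ hA).ne' hρ
  have hR (s : ℝ) : ENNReal.ofReal ((ρ.toReal ^ (1 / (a + b))) ^ s) = ρ ^ (s / (a + b)) := by
    rw [← Real.rpow_mul hρ₀.le, ← ENNReal.ofReal_rpow_of_pos hρ₀, ENNReal.ofReal_toReal hρ,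
      one_div_mul_eq_div]
  have hθ : b / (a + b) = 1 - a / (a + b) := by field_simp; ring
  calc F ≤ C₁ * ENNReal.ofReal ((ρ.toReal ^ (1 / (a + b))) ^ a) * A +
        C₂ * ENNReal.ofReal ((ρ.toReal ^ (1 / (a + b))) ^ (-b)) * B := h _ (by positivity)
    _ = (C₁ + C₂) * A ^ (b / (a + b)) * B ^ (a / (a + b)) := by
        rw [hR, hR, neg_div, ENNReal.rpow_neg, ← ENNReal.inv_rpow,
          ENNReal.inv_div (.inr hB) (.inr hB₀), mul_assoc, mul_assoc,
          ENNReal.div_rpow_mul_self _ hA₀ hA (by positivity),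
          ENNReal.div_rpow_mul_self _ hB₀ hB (by positivity), hθ, sub_sub_cancel]
        ring

end Exponents

section Metric

lemma enorm_rpow_neg_le {F : Type*} [NormedAddCommGroup F] {x : F} {r γ : ℝ} (hr : 0 < r)
    (hγ : 0 ≤ γ) (h : r ≤ ‖x‖) : ‖x‖ₑ ^ (-γ) ≤ ENNReal.ofReal (r ^ (-γ)) := by
  rw [← ofReal_norm, ENNReal.ofReal_rpow_of_pos (hr.trans_le h)]
  exact ENNReal.ofReal_le_ofReal (Real.rpow_le_rpow_of_nonpos hr h (by linarith))

lemma enorm_div_norm_rpow_le {F : Type*} [NormedAddCommGroup F] (a : ℝ) (v : F) (γ : ℝ) :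
    ‖a / ‖v‖ ^ γ‖ₑ ≤ ‖a‖ₑ * ‖v‖ₑ ^ (-γ) := by
  rcases eq_or_ne v 0 with rfl | hv
  · rcases eq_or_ne γ 0 with rfl | hγ <;> simp [*]
  have hv' : 0 < ‖v‖ := norm_pos_iff.2 hv
  rw [← ofReal_norm (a / _), norm_div, Real.norm_of_nonneg (Real.rpow_nonneg hv'.le γ),
    ENNReal.ofReal_div_of_pos (Real.rpow_pos_of_pos hv' γ), ← ENNReal.ofReal_rpow_of_pos hv',
    ofReal_norm, ofReal_norm, ENNReal.rpow_neg, div_eq_mul_inv]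

lemma ball_diff_singleton_subset_iUnion {X : Type*} [MetricSpace X] (x : X) (R : ℝ) :
    ball x R \ {x} ⊆ ⋃ k : ℕ, closedBall x (R / 2 ^ k) \ ball x (R / 2 ^ k / 2) := by
  rintro y ⟨hyR, hyx⟩
  have hy : 0 < dist y x := dist_pos.mpr hyx
  obtain ⟨k, hk, hk'⟩ :=
    exists_nat_pow_near ((one_le_div hy).mpr (mem_ball.mp hyR).le) one_lt_two
  refine mem_iUnion.mpr ⟨k, mem_closedBall.mpr ?_, fun h ↦ ?_⟩
  · rwa [le_div_iff₀ hy, ← le_div_iff₀' (by positivity)] at hk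
  · rw [div_div, ← pow_succ, mem_ball, lt_div_iff₀ (by positivity)] at h
    rw [div_lt_iff₀ hy] at hk'
    linarith [mul_comm (dist y x) (2 ^ (k + 1))]

lemma compl_ball_subset_iUnion {X : Type*} [PseudoMetricSpace X] (x : X) {R : ℝ} (hR : 0 < R) :
    (ball x R)ᶜ ⊆ ⋃ k : ℕ, ball x (2 * (R * 2 ^ k)) \ ball x (R * 2 ^ k) := by
  intro y hy
  obtain ⟨k, hk, hk'⟩ := exists_nat_pow_near ((one_le_div hR).mpr (not_lt.mp hy)) one_lt_two
  refine mem_iUnion.mpr ⟨k, mem_ball.mpr ?_, fun h ↦ ?_⟩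
  · rw [div_lt_iff₀ hR] at hk'
    linarith [show (2 : ℝ) ^ (k + 1) * R = 2 * (R * 2 ^ k) by ring]
  · rw [le_div_iff₀ hR, mul_comm] at hk
    exact (mem_ball.mp h).not_ge hk

end Metric

section MaximalFunction

variable {X : Type*} [PseudoMetricSpace X] [MeasurableSpace X]

/-- The centred Hardy–Littlewood maximal function. Rational radii make it measurable; a radius
`r ≤ 0` gives the empty ball, whose average is `0`. -/
def maximalFunction (μ : Measure X) (g : X → ℝ≥0∞) (x : X) : ℝ≥0∞ :=
  ⨆ r : ℚ, ⨍⁻ y in ball x r, g y ∂μ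

lemma maximalFunction_le_add_const {μ : Measure X} {f g : X → ℝ≥0∞} {c : ℝ≥0∞}
    (hfg : ∀ y, f y ≤ g y + c) (x : X) : maximalFunction μ f x ≤ maximalFunction μ g x + c := by
  refine iSup_le fun r ↦ ?_
  calc ⨍⁻ y in ball x r, f y ∂μ ≤ ⨍⁻ y in ball x r, (g y + c) ∂μ :=
        setLAverage_mono_ae _ (.of_forall hfg)
    _ = ⨍⁻ y in ball x r, g y ∂μ + c * (μ (ball x r) / μ (ball x r)) := by
        rw [setLAverage_eq, setLAverage_eq, lintegral_add_right _ measurable_const,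
          setLIntegral_const, ENNReal.add_div, mul_div_assoc]
    _ ≤ maximalFunction μ g x + c :=
        add_le_add (le_iSup (fun r : ℚ ↦ ⨍⁻ y in ball x r, g y ∂μ) r)
          (mul_le_of_le_one_right' ENNReal.div_self_le_one)

end MaximalFunction

section HaarMeasure

variable {E : Type*} [NormedAddCommGroup E] [NormedSpace ℝ E] [FiniteDimensional ℝ E]
  [MeasurableSpace E] [BorelSpace E] {μ : Measure E} [μ.IsAddHaarMeasure]

lemma measure_ball_mul [Nontrivial E] (x : E) {c : ℝ} (hc : 0 ≤ c) (r : ℝ) :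
    μ (ball x (c * r)) = ENNReal.ofReal (c ^ finrank ℝ E) * μ (ball x r) := by
  rw [Measure.addHaar_ball_mul μ x hc, Measure.addHaar_ball_center μ x]

lemma measurable_setLIntegral_ball {g : E → ℝ≥0∞} (hg : Measurable g) (r : ℝ) :
    Measurable fun x ↦ ∫⁻ y in ball x r, g y ∂μ := by
  simp_rw [← lintegral_indicator measurableSet_ball]
  exact Measurable.lintegral_prod_right' (f := fun z : E × E ↦ (ball z.1 r).indicator g z.2)
    ((hg.comp measurable_snd).indicator (measurableSet_lt (by fun_prop) measurable_const))

lemma measurable_maximalFunction {g : E → ℝ≥0∞} (hg : Measurable g) :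
    Measurable (maximalFunction μ g) := by
  refine Measurable.iSup fun r : ℚ ↦ ?_
  simp_rw [setLAverage_eq, Measure.addHaar_ball_center μ _ (r : ℝ)]
  exact (measurable_setLIntegral_ball hg r).div_const _

lemma setLIntegral_closedBall_le_maximalFunction [Nontrivial E] (g : E → ℝ≥0∞) (x : E)
    {r : ℝ} (hr : 0 < r) :
    ∫⁻ y in closedBall x r, g y ∂μ ≤ 2 ^ finrank ℝ E * μ (ball x r) * maximalFunction μ g x := by
  obtain ⟨s, hrs, hs2r⟩ := exists_rat_btwn (show r < 2 * r by linarith)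
  have hball : μ (ball x s) ≤ 2 ^ finrank ℝ E * μ (ball x r) := by
    calc μ (ball x s) ≤ μ (ball x (2 * r)) := measure_mono (ball_subset_ball hs2r.le)
      _ = 2 ^ finrank ℝ E * μ (ball x r) := by
        rw [measure_ball_mul x zero_le_two, ENNReal.ofReal_pow zero_le_two, ENNReal.ofReal_ofNat]
  calc ∫⁻ y in closedBall x r, g y ∂μ ≤ ∫⁻ y in ball x s, g y ∂μ :=
        lintegral_mono_set (closedBall_subset_ball hrs)
    _ = μ (ball x s) * ⨍⁻ y in ball x s, g y ∂μ :=
        (measure_mul_setLAverage _ measure_ball_lt_top.ne).symm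
    _ ≤ 2 ^ finrank ℝ E * μ (ball x r) * maximalFunction μ g x :=
        mul_le_mul' hball (le_iSup (fun r : ℚ ↦ ⨍⁻ y in ball x r, g y ∂μ) s)

lemma exists_lt_mul_measure_ball [Nontrivial E] {t I : ℝ≥0∞} (ht : t ≠ 0) (hI : I ≠ ∞) :
    ∃ R : ℝ, I < t * μ (ball (0 : E) R) := by
  have hlim : Tendsto (fun n : ℕ ↦ μ (ball (0 : E) n)) atTop (𝓝 ∞) := by
    rw [← measure_univ_of_isAddLeftInvariant μ, ← iUnion_ball_nat (0 : E)]
    exact tendsto_measure_iUnion_atTop fun m n hmn ↦ ball_subset_ball (by exact_mod_cast hmn)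
  obtain ⟨n, hn⟩ := ((tendsto_order.1 hlim).1 (I / t) (ENNReal.div_lt_top hI ht)).exists
  exact ⟨n, by rwa [ENNReal.div_lt_iff (.inl ht) (.inr hI), mul_comm] at hn⟩

lemma exists_radius_lt_setLIntegral_ball [Nontrivial E] {g : E → ℝ≥0∞} {t : ℝ≥0∞}
    (ht : t ≠ 0) (hI : ∫⁻ y, g y ∂μ ≠ ∞) :
    ∃ R : ℝ, ∀ x, t < maximalFunction μ g x →
      ∃ r, 0 < r ∧ r ≤ R ∧ t * μ (ball x r) < ∫⁻ y in ball x r, g y ∂μ := by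
  obtain ⟨R, hR⟩ := exists_lt_mul_measure_ball (μ := μ) ht hI
  refine ⟨R, fun x hx ↦ ?_⟩
  obtain ⟨r, hr⟩ := lt_iSup_iff.mp hx
  have hlt : t * μ (ball x r) < ∫⁻ y in ball x r, g y ∂μ :=
    ENNReal.mul_lt_of_lt_div (by rwa [setLAverage_eq] at hr)
  refine ⟨r, ?_, ?_, hlt⟩
  · by_contra! h
    simp [ball_eq_empty.mpr h] at hlt
  · by_contra! h
    refine (hR.trans_le ?_).not_ge (hlt.le.trans (setLIntegral_le_lintegral _ _))
    rw [← Measure.addHaar_ball_center μ x]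
    gcongr

theorem mul_meas_lt_maximalFunction_le [Nontrivial E] (g : E → ℝ≥0∞) (t : ℝ≥0∞) :
    t * μ {x | t < maximalFunction μ g x} ≤ 4 ^ finrank ℝ E * ∫⁻ y, g y ∂μ := by
  rcases eq_or_ne t 0 with rfl | ht
  · simp
  rcases eq_or_ne (∫⁻ y, g y ∂μ) ∞ with hI | hI
  · simp [hI]
  obtain ⟨R, hR⟩ := exists_radius_lt_setLIntegral_ball (μ := μ) ht hI
  choose! r hr₀ hrR hr using hR
  obtain ⟨u, huS, hdisj, hcover⟩ :=
    Vitali.exists_disjoint_subfamily_covering_enlargement_closedBall _ id r R hrR 4 (by norm_num)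
  have hu : u.Countable := (hdisj.mono fun _ ↦ ball_subset_closedBall).countable_of_isOpen
    (fun _ _ ↦ isOpen_ball) fun b hb ↦ nonempty_ball.2 (hr₀ b (huS hb))
  have hcover' : {x | t < maximalFunction μ g x} ⊆ ⋃ b ∈ u, closedBall b (4 * r b) := by
    intro x hx
    obtain ⟨b, hb, hxb⟩ := hcover x hx
    exact mem_biUnion hb (hxb (mem_closedBall_self (hr₀ x hx).le))
  have : Countable u := hu.to_subtype
  calc t * μ {x | t < maximalFunction μ g x}
      ≤ t * ∑' b : u, μ (closedBall b (4 * r b)) := by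
        gcongr
        exact (measure_mono hcover').trans (measure_biUnion_le _ hu _)
    _ = 4 ^ finrank ℝ E * ∑' b : u, t * μ (ball b (r b)) := by
        rw [← ENNReal.tsum_mul_left, ← ENNReal.tsum_mul_left]
        refine tsum_congr fun b ↦ ?_
        rw [Measure.addHaar_closedBall_eq_addHaar_ball, measure_ball_mul _ (by norm_num),
          ENNReal.ofReal_pow (by norm_num), ENNReal.ofReal_ofNat]
        ring
    _ ≤ 4 ^ finrank ℝ E * ∑' b : u, ∫⁻ y in ball b (r b), g y ∂μ := by
        gcongr with b
        exact (hr b (huS b.2)).le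
    _ = 4 ^ finrank ℝ E * ∫⁻ y in ⋃ b : u, ball b (r b), g y ∂μ := by
        rw [lintegral_iUnion (fun _ ↦ measurableSet_ball)]
        exact fun a b hab ↦ (hdisj a.2 b.2 (Subtype.coe_injective.ne hab)).mono
          ball_subset_closedBall ball_subset_closedBall
    _ ≤ 4 ^ finrank ℝ E * ∫⁻ y, g y ∂μ := by
        gcongr
        exact Measure.restrict_le_self

lemma meas_lt_maximalFunction_mul_rpow_le [Nontrivial E] (g : E → ℝ≥0∞) {p t : ℝ}
    (ht : 0 < t) :
    μ {x | ENNReal.ofReal t < maximalFunction μ g x} * ENNReal.ofReal (t ^ (p - 1)) ≤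
      2 * 4 ^ finrank ℝ E * ∫⁻ y, {y | ENNReal.ofReal t < 2 * g y}.indicator g y *
        ENNReal.ofReal (t ^ (p - 2)) ∂μ := by
  set G := {y | ENNReal.ofReal t < 2 * g y}.indicator g
  -- the part of `g` below height `t / 2` contributes at most `t / 2` to `M g`
  have hsplit (y : E) : g y ≤ G y + ENNReal.ofReal (t / 2) := by
    by_cases hy : ENNReal.ofReal t < 2 * g y
    · simp [G, hy]
    · rw [show G y = 0 by simp [G, hy], zero_add, ENNReal.ofReal_div_of_pos two_pos,
        ENNReal.ofReal_ofNat,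
        ENNReal.le_div_iff_mul_le (.inl two_ne_zero) (.inl ENNReal.ofNat_ne_top), mul_comm]
      exact not_lt.mp hy
  have hsub : {x | ENNReal.ofReal t < maximalFunction μ g x} ⊆
      {x | ENNReal.ofReal (t / 2) < maximalFunction μ G x} := by
    intro x hx
    by_contra hle
    refine (lt_of_lt_of_le hx ((maximalFunction_le_add_const hsplit x).trans ?_)).false
    calc maximalFunction μ G x + ENNReal.ofReal (t / 2)
        ≤ ENNReal.ofReal (t / 2) + ENNReal.ofReal (t / 2) := add_le_add_left (not_lt.mp hle) _
      _ = ENNReal.ofReal t := by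
        rw [← ENNReal.ofReal_add (by positivity) (by positivity), add_halves]
  have hpow : t ^ (p - 1) = t / 2 * (2 * t ^ (p - 2)) := by
    rw [show p - 1 = p - 2 + 1 by ring, Real.rpow_add_one ht.ne']
    ring
  calc μ {x | ENNReal.ofReal t < maximalFunction μ g x} * ENNReal.ofReal (t ^ (p - 1))
      = ENNReal.ofReal (t / 2) * μ {x | ENNReal.ofReal t < maximalFunction μ g x} *
          ENNReal.ofReal (2 * t ^ (p - 2)) := by
        rw [hpow, ENNReal.ofReal_mul (by positivity)]
        ring
    _ ≤ 4 ^ finrank ℝ E * (∫⁻ y, G y ∂μ) * ENNReal.ofReal (2 * t ^ (p - 2)) :=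
        mul_le_mul_left ((mul_le_mul_right (measure_mono hsub) _).trans
          (mul_meas_lt_maximalFunction_le G _)) _
    _ = 2 * 4 ^ finrank ℝ E * ∫⁻ y, G y * ENNReal.ofReal (t ^ (p - 2)) ∂μ := by
        rw [lintegral_mul_const' _ _ ENNReal.ofReal_ne_top,
          ENNReal.ofReal_mul zero_le_two, ENNReal.ofReal_ofNat]
        ring

theorem lintegral_maximalFunction_rpow_le [Nontrivial E] {p : ℝ} (hp : 1 < p) :
    ∃ C : ℝ≥0∞, C ≠ ∞ ∧ ∀ g : E → ℝ≥0∞, Measurable g →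
      ∫⁻ x, maximalFunction μ g x ^ p ∂μ ≤ C * ∫⁻ x, g x ^ p ∂μ := by
  set c : ℝ≥0∞ := 2 ^ (p - 1) / ENNReal.ofReal (p - 1)
  have hc : c ≠ ∞ := ENNReal.div_ne_top (by finiteness) (by simpa using hp)
  refine ⟨ENNReal.ofReal p * (2 * 4 ^ finrank ℝ E * c), by finiteness, fun g hg ↦ ?_⟩
  calc ∫⁻ x, maximalFunction μ g x ^ p ∂μ
      = ENNReal.ofReal p * ∫⁻ t in Ioi 0, μ {x | ENNReal.ofReal t < maximalFunction μ g x} *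
          ENNReal.ofReal (t ^ (p - 1)) :=
        lintegral_rpow_eq_lintegral_meas_lt_mul_of_ennreal μ (measurable_maximalFunction hg)
          (by linarith)
    _ ≤ ENNReal.ofReal p * ∫⁻ t in Ioi 0, 2 * 4 ^ finrank ℝ E * ∫⁻ y,
          {y | ENNReal.ofReal t < 2 * g y}.indicator g y * ENNReal.ofReal (t ^ (p - 2)) ∂μ :=
        mul_le_mul_right (setLIntegral_mono' measurableSet_Ioi fun t ht ↦
          meas_lt_maximalFunction_mul_rpow_le g ht) _
    _ = ENNReal.ofReal p * (2 * 4 ^ finrank ℝ E * ∫⁻ y, (∫⁻ t in Ioi 0,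
          {t : ℝ | ENNReal.ofReal t < 2 * g y}.indicator (fun _ ↦ g y) t *
            ENNReal.ofReal (t ^ (p - 2))) ∂μ) := by
        rw [lintegral_const_mul' _ _ (by finiteness), lintegral_lintegral_swap]
        · rfl
        refine Measurable.aemeasurable (Measurable.mul ?_ (by fun_prop))
        exact (hg.comp measurable_snd).indicator (measurableSet_lt (by fun_prop) (by fun_prop))
    _ = ENNReal.ofReal p * (2 * 4 ^ finrank ℝ E * c) * ∫⁻ x, g x ^ p ∂μ := by
        simp_rw [lintegral_Ioi_indicator_mul_rpow hp]
        rw [lintegral_const_mul' _ _ hc]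
        ring

lemma setLIntegral_closedBall_diff_ball_mul_rpow_neg_le [Nontrivial E] (g : E → ℝ≥0∞) (x : E)
    {γ r : ℝ} (hγ : 0 ≤ γ) (hr : 0 < r) :
    ∫⁻ y in closedBall x r \ ball x (r / 2), g y * ‖x - y‖ₑ ^ (-γ) ∂μ ≤
      2 ^ finrank ℝ E * ENNReal.ofReal (2 ^ γ) * μ (ball 0 1) *
        ENNReal.ofReal (r ^ (finrank ℝ E - γ)) * maximalFunction μ g x := by
  have hreal : (r / 2) ^ (-γ) * r ^ finrank ℝ E = 2 ^ γ * r ^ (finrank ℝ E - γ) := by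
    rw [Real.div_rpow hr.le zero_le_two, Real.rpow_neg zero_le_two, div_inv_eq_mul,
      ← Real.rpow_natCast, sub_eq_neg_add, Real.rpow_add hr]
    ring
  calc ∫⁻ y in closedBall x r \ ball x (r / 2), g y * ‖x - y‖ₑ ^ (-γ) ∂μ
      ≤ ∫⁻ y in closedBall x r \ ball x (r / 2), g y * ENNReal.ofReal ((r / 2) ^ (-γ)) ∂μ := by
        refine setLIntegral_mono' (measurableSet_closedBall.diff measurableSet_ball)
          fun y hy ↦ mul_le_mul_right (enorm_rpow_neg_le (by positivity) hγ ?_) _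
        rw [← dist_eq_norm, dist_comm]
        exact not_lt.mp hy.2
    _ ≤ ENNReal.ofReal ((r / 2) ^ (-γ)) * ∫⁻ y in closedBall x r, g y ∂μ := by
        rw [lintegral_mul_const' _ _ ENNReal.ofReal_ne_top, mul_comm]
        exact mul_le_mul_right (lintegral_mono_set sdiff_subset) _
    _ ≤ ENNReal.ofReal ((r / 2) ^ (-γ)) *
          (2 ^ finrank ℝ E * μ (ball x r) * maximalFunction μ g x) :=
        mul_le_mul_right (setLIntegral_closedBall_le_maximalFunction g x hr) _
    _ = _ := by
        rw [Measure.addHaar_ball μ x hr.le,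
          show ∀ a b c e f : ℝ≥0∞, a * (c * (b * e) * f) = a * b * (c * e * f) by
            intros; ring,
          ← ENNReal.ofReal_mul (by positivity), hreal, ENNReal.ofReal_mul (by positivity)]
        ring

theorem setLIntegral_ball_mul_rpow_neg_le [Nontrivial E] {γ : ℝ} (hγ : 0 ≤ γ)
    (hγd : γ < finrank ℝ E) :
    ∃ C : ℝ≥0∞, C ≠ ∞ ∧ ∀ (g : E → ℝ≥0∞) (x : E) {R : ℝ}, 0 < R →
      ∫⁻ y in ball x R, g y * ‖x - y‖ₑ ^ (-γ) ∂μ ≤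
        C * ENNReal.ofReal (R ^ (finrank ℝ E - γ)) * maximalFunction μ g x := by
  set r := ENNReal.ofReal ((2 : ℝ) ^ (-(finrank ℝ E - γ)))
  have hr : r < 1 := ENNReal.ofReal_lt_one.mpr
    (Real.rpow_lt_one_of_one_lt_of_neg one_lt_two (by linarith))
  have hgeom : (1 - r)⁻¹ ≠ ∞ := ENNReal.inv_ne_top.mpr (tsub_pos_of_lt hr).ne'
  have hball : μ (ball 0 1) ≠ ∞ := measure_ball_lt_top.ne
  refine ⟨2 ^ finrank ℝ E * ENNReal.ofReal (2 ^ γ) * μ (ball 0 1) * (1 - r)⁻¹, by finiteness,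
    fun g x R hR ↦ ?_⟩
  calc ∫⁻ y in ball x R, g y * ‖x - y‖ₑ ^ (-γ) ∂μ
      = ∫⁻ y in ball x R \ {x}, g y * ‖x - y‖ₑ ^ (-γ) ∂μ :=
        setLIntegral_congr (sdiff_null_ae_eq_self (measure_singleton x)).symm
    _ ≤ ∑' k : ℕ, ∫⁻ y in closedBall x (R / 2 ^ k) \ ball x (R / 2 ^ k / 2),
          g y * ‖x - y‖ₑ ^ (-γ) ∂μ :=
        (lintegral_mono_set (ball_diff_singleton_subset_iUnion x R)).trans
          (lintegral_iUnion_le _ _)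
    _ ≤ ∑' k : ℕ, 2 ^ finrank ℝ E * ENNReal.ofReal (2 ^ γ) * μ (ball 0 1) *
          ENNReal.ofReal (R ^ (finrank ℝ E - γ)) * maximalFunction μ g x * r ^ k := by
        refine ENNReal.tsum_le_tsum fun k ↦
          (setLIntegral_closedBall_diff_ball_mul_rpow_neg_le g x hγ (by positivity)).trans_eq ?_
        rw [Real.div_two_pow_rpow hR.le, ENNReal.ofReal_mul (by positivity),
          ENNReal.ofReal_pow (by positivity)]
        ring
    _ = _ := by
        rw [ENNReal.tsum_mul_left, ENNReal.tsum_geometric]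
        ring

lemma setLIntegral_ball_diff_ball_rpow_neg_le [Nontrivial E] (x : E) {s r : ℝ} (hs : 0 ≤ s)
    (hr : 0 < r) :
    ∫⁻ y in ball x (2 * r) \ ball x r, ‖x - y‖ₑ ^ (-s) ∂μ ≤
      2 ^ finrank ℝ E * μ (ball 0 1) * ENNReal.ofReal (r ^ (finrank ℝ E - s)) := by
  calc ∫⁻ y in ball x (2 * r) \ ball x r, ‖x - y‖ₑ ^ (-s) ∂μ
      ≤ ∫⁻ y in ball x (2 * r) \ ball x r, ENNReal.ofReal (r ^ (-s)) ∂μ := by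
        refine setLIntegral_mono' (measurableSet_ball.diff measurableSet_ball)
          fun y hy ↦ enorm_rpow_neg_le hr hs ?_
        rw [← dist_eq_norm, dist_comm]
        exact not_lt.mp hy.2
    _ ≤ ENNReal.ofReal (r ^ (-s)) * μ (ball x (2 * r)) := by
        rw [setLIntegral_const]
        exact mul_le_mul_right (measure_mono sdiff_subset) _
    _ = _ := by
        rw [measure_ball_mul x zero_le_two, Measure.addHaar_ball μ x hr.le,
          ENNReal.ofReal_pow zero_le_two, ENNReal.ofReal_ofNat,
          show ∀ a b c e : ℝ≥0∞, a * (b * (c * e)) = b * e * (a * c) by intros; ring,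
          ← ENNReal.ofReal_mul (by positivity), ← Real.rpow_natCast, ← Real.rpow_add hr,
          neg_add_eq_sub]

theorem setLIntegral_compl_ball_rpow_neg_le [Nontrivial E] {s : ℝ} (hs : finrank ℝ E < s) :
    ∃ C : ℝ≥0∞, C ≠ ∞ ∧ ∀ (x : E) {R : ℝ}, 0 < R →
      ∫⁻ y in (ball x R)ᶜ, ‖x - y‖ₑ ^ (-s) ∂μ ≤ C * ENNReal.ofReal (R ^ (finrank ℝ E - s)) := by
  set r := ENNReal.ofReal ((2 : ℝ) ^ (finrank ℝ E - s))
  have hr : r < 1 := ENNReal.ofReal_lt_one.mpr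
    (Real.rpow_lt_one_of_one_lt_of_neg one_lt_two (by linarith))
  have hgeom : (1 - r)⁻¹ ≠ ∞ := ENNReal.inv_ne_top.mpr (tsub_pos_of_lt hr).ne'
  have hball : μ (ball 0 1) ≠ ∞ := measure_ball_lt_top.ne
  refine ⟨2 ^ finrank ℝ E * μ (ball 0 1) * (1 - r)⁻¹, by finiteness, fun x R hR ↦ ?_⟩
  calc ∫⁻ y in (ball x R)ᶜ, ‖x - y‖ₑ ^ (-s) ∂μ
      ≤ ∑' k : ℕ, ∫⁻ y in ball x (2 * (R * 2 ^ k)) \ ball x (R * 2 ^ k), ‖x - y‖ₑ ^ (-s) ∂μ :=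
        (lintegral_mono_set (compl_ball_subset_iUnion x hR)).trans (lintegral_iUnion_le _ _)
    _ ≤ ∑' k : ℕ, 2 ^ finrank ℝ E * μ (ball 0 1) * ENNReal.ofReal (R ^ (finrank ℝ E - s)) *
          r ^ k := by
        refine ENNReal.tsum_le_tsum fun k ↦ (setLIntegral_ball_diff_ball_rpow_neg_le x
          ((Nat.cast_nonneg _).trans hs.le) (by positivity)).trans_eq ?_
        rw [Real.mul_two_pow_rpow hR.le, ENNReal.ofReal_mul (by positivity),
          ENNReal.ofReal_pow (by positivity)]
        ring
    _ = _ := by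
        rw [ENNReal.tsum_mul_left, ENNReal.tsum_geometric]
        ring

theorem setLIntegral_compl_ball_mul_rpow_neg_le [Nontrivial E] {γ p p' : ℝ}
    (hpp' : p.HolderConjugate p') (hd : finrank ℝ E < γ * p') :
    ∃ C : ℝ≥0∞, C ≠ ∞ ∧ ∀ g : E → ℝ≥0∞, Measurable g → ∀ (x : E) {R : ℝ}, 0 < R →
      ∫⁻ y in (ball x R)ᶜ, g y * ‖x - y‖ₑ ^ (-γ) ∂μ ≤
        C * ENNReal.ofReal (R ^ (finrank ℝ E / p' - γ)) * (∫⁻ y, g y ^ p ∂μ) ^ (1 / p) := by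
  obtain ⟨C, hC, hfar⟩ := setLIntegral_compl_ball_rpow_neg_le (μ := μ) hd
  have hp : 0 < p := hpp'.pos
  have hp' : 0 < p' := hpp'.symm.pos
  refine ⟨C ^ (1 / p'), ENNReal.rpow_ne_top_of_nonneg (by positivity) hC, fun g hg x R hR ↦ ?_⟩
  calc ∫⁻ y in (ball x R)ᶜ, g y * ‖x - y‖ₑ ^ (-γ) ∂μ
      ≤ (∫⁻ y in (ball x R)ᶜ, g y ^ p ∂μ) ^ (1 / p) *
          (∫⁻ y in (ball x R)ᶜ, (‖x - y‖ₑ ^ (-γ)) ^ p' ∂μ) ^ (1 / p') :=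
        ENNReal.lintegral_mul_le_Lp_mul_Lq _ hpp' hg.aemeasurable (by fun_prop)
    _ ≤ (∫⁻ y, g y ^ p ∂μ) ^ (1 / p) *
          (C * ENNReal.ofReal (R ^ (finrank ℝ E - γ * p'))) ^ (1 / p') := by
        refine mul_le_mul' (ENNReal.rpow_le_rpow (setLIntegral_le_lintegral _ _) (by positivity))
          (ENNReal.rpow_le_rpow ?_ (by positivity))
        simp_rw [← ENNReal.rpow_mul, neg_mul]
        exact hfar x hR
    _ = C ^ (1 / p') * ENNReal.ofReal (R ^ (finrank ℝ E / p' - γ)) *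
          (∫⁻ y, g y ^ p ∂μ) ^ (1 / p) := by
        rw [ENNReal.mul_rpow_of_nonneg _ _ (by positivity),
          ENNReal.ofReal_rpow_of_pos (by positivity), ← Real.rpow_mul hR.le,
          show (finrank ℝ E - γ * p') * (1 / p') = finrank ℝ E / p' - γ by field_simp]
        ring

theorem lintegral_mul_rpow_neg_le_add [Nontrivial E] {γ p q : ℝ} (hγd : γ < finrank ℝ E)
    (hp : 1 < p) (hq : 0 < q) (hpq : 1 / p + γ / finrank ℝ E = 1 + 1 / q) :
    ∃ C₁ C₂ : ℝ≥0∞, C₁ ≠ ∞ ∧ C₂ ≠ ∞ ∧ ∀ g : E → ℝ≥0∞, Measurable g → ∀ (x : E) {R : ℝ}, 0 < R →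
      ∫⁻ y, g y * ‖x - y‖ₑ ^ (-γ) ∂μ ≤
        C₁ * ENNReal.ofReal (R ^ (finrank ℝ E - γ)) * maximalFunction μ g x +
          C₂ * ENNReal.ofReal (R ^ (-(finrank ℝ E / q))) * (∫⁻ y, g y ^ p ∂μ) ^ (1 / p) := by
  set d : ℝ := (finrank ℝ E : ℝ)
  have hd : 0 < d := Nat.cast_pos.mpr finrank_pos
  have hpp' := Real.HolderConjugate.conjExponent hp
  set p' := p.conjExponent
  have hp' : 0 < p' := hpp'.symm.pos
  have hγp' : γ / d = 1 / p' + 1 / q := by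
    have := hpp'.inv_add_inv_eq_one
    rw [one_div, one_div] at *
    linarith
  have hγ : 0 < γ := (div_pos_iff_of_pos_right hd).mp (by rw [hγp']; positivity)
  have hdγ : d < γ * p' := by
    have : γ * p' = d + d * p' / q := by
      field_simp at hγp' ⊢
      linarith
    linarith [show 0 < d * p' / q by positivity]
  have hfar_exp : d / p' - γ = -(d / q) := by
    field_simp at hγp' ⊢
    linarith
  obtain ⟨C₁, hC₁, hnear⟩ := setLIntegral_ball_mul_rpow_neg_le (μ := μ) hγ.le hγd
  obtain ⟨C₂, hC₂, hfar⟩ := setLIntegral_compl_ball_mul_rpow_neg_le (μ := μ) hpp' hdγ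
  refine ⟨C₁, C₂, hC₁, hC₂, fun g hg x R hR ↦ ?_⟩
  rw [← lintegral_add_compl _ measurableSet_ball, ← hfar_exp]
  exact add_le_add (hnear g x hR) (hfar g hg x hR)

/-- Hedberg's inequality. -/
theorem lintegral_mul_rpow_neg_le_maximalFunction [Nontrivial E] {γ p q : ℝ}
    (hγd : γ < finrank ℝ E) (hp : 1 < p) (hq : 0 < q)
    (hpq : 1 / p + γ / finrank ℝ E = 1 + 1 / q) :
    ∃ C : ℝ≥0∞, C ≠ ∞ ∧ ∀ g : E → ℝ≥0∞, Measurable g → ∫⁻ y, g y ^ p ∂μ ≠ ∞ → ∀ x,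
      ∫⁻ y, g y * ‖x - y‖ₑ ^ (-γ) ∂μ ≤
        C * maximalFunction μ g x ^ (p / q) * (∫⁻ y, g y ^ p ∂μ) ^ (1 / p - 1 / q) := by
  obtain ⟨C₁, C₂, hC₁, hC₂, hsplit⟩ := lintegral_mul_rpow_neg_le_add (μ := μ) hγd hp hq hpq
  refine ⟨C₁ + C₂, by finiteness, fun g hg hgp x ↦ ?_⟩
  have hp₀ : 0 < p := by linarith
  rcases eq_or_ne (∫⁻ y, g y ^ p ∂μ) 0 with h0 | h0
  · have := ENNReal.lintegral_mul_eq_zero_of_lintegral_rpow_eq_zero hp₀.le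
      hg.aemeasurable h0 (g := fun y ↦ ‖x - y‖ₑ ^ (-γ))
    simp only [Pi.mul_apply] at this
    simp [this]
  set d : ℝ := (finrank ℝ E : ℝ)
  have hd : 0 < d := Nat.cast_pos.mpr finrank_pos
  have key := le_mul_rpow_mul_rpow_of_forall_le (sub_pos.mpr hγd) (by positivity : 0 < d / q) hC₂
    (ENNReal.rpow_pos (pos_iff_ne_zero.2 h0) hgp).ne'
    (ENNReal.rpow_ne_top_of_nonneg (by positivity) hgp) fun R hR ↦ hsplit g hg x hR
  rw [show d - γ + d / q = d / p by field_simp at hpq ⊢; linarith, ← ENNReal.rpow_mul] at key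
  convert key using 3
  · field_simp
  · field_simp at hpq ⊢
    linarith

theorem lintegral_rpow_lintegral_mul_rpow_neg_le [Nontrivial E] {γ p q : ℝ}
    (hγd : γ < finrank ℝ E) (hp : 1 < p) (hq : 0 < q)
    (hpq : 1 / p + γ / finrank ℝ E = 1 + 1 / q) :
    ∃ C : ℝ≥0∞, C ≠ ∞ ∧ ∀ g : E → ℝ≥0∞, Measurable g → ∫⁻ y, g y ^ p ∂μ ≠ ∞ →
      ∫⁻ x, (∫⁻ y, g y * ‖x - y‖ₑ ^ (-γ) ∂μ) ^ q ∂μ ≤ C * (∫⁻ y, g y ^ p ∂μ) ^ (q / p) := by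
  obtain ⟨C, hC, hpointwise⟩ := lintegral_mul_rpow_neg_le_maximalFunction (μ := μ) hγd hp hq hpq
  obtain ⟨K, hK, hmaximal⟩ := lintegral_maximalFunction_rpow_le (μ := μ) hp
  have hs : 0 ≤ (1 / p - 1 / q) * q := by
    have : γ / finrank ℝ E < 1 := (div_lt_one (Nat.cast_pos.mpr finrank_pos)).mpr hγd
    exact mul_nonneg (by linarith) hq.le
  refine ⟨C ^ q * K, by finiteness, fun g hg hgp ↦ ?_⟩
  calc ∫⁻ x, (∫⁻ y, g y * ‖x - y‖ₑ ^ (-γ) ∂μ) ^ q ∂μ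
      ≤ ∫⁻ x, (C * maximalFunction μ g x ^ (p / q) *
          (∫⁻ y, g y ^ p ∂μ) ^ (1 / p - 1 / q)) ^ q ∂μ :=
        lintegral_mono fun x ↦ ENNReal.rpow_le_rpow (hpointwise g hg hgp x) hq.le
    _ = C ^ q * (∫⁻ y, g y ^ p ∂μ) ^ ((1 / p - 1 / q) * q) *
          ∫⁻ x, maximalFunction μ g x ^ p ∂μ := by
        simp_rw [ENNReal.mul_rpow_of_nonneg _ _ hq.le, ← ENNReal.rpow_mul,
          div_mul_cancel₀ p hq.ne']
        rw [← lintegral_const_mul' _ _ (by finiteness)]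
        exact lintegral_congr fun x ↦ by ring
    _ ≤ C ^ q * (∫⁻ y, g y ^ p ∂μ) ^ ((1 / p - 1 / q) * q) * (K * ∫⁻ y, g y ^ p ∂μ) := by
        gcongr
        exact hmaximal g hg
    _ = C ^ q * K * (∫⁻ y, g y ^ p ∂μ) ^ (q / p) := by
        rw [show q / p = (1 / p - 1 / q) * q + 1 by field_simp; ring,
          ENNReal.rpow_add_of_nonneg _ _ hs zero_le_one, ENNReal.rpow_one]
        ring

theorem eLpNorm_integral_div_norm_rpow_le [Nontrivial E] {γ p q : ℝ} (hγd : γ < finrank ℝ E)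
    (hp : 1 < p) (hq : 0 < q) (hpq : 1 / p + γ / finrank ℝ E = 1 + 1 / q) :
    ∃ C : ℝ≥0∞, C ≠ ∞ ∧ ∀ f : E → ℝ, MemLp f (ENNReal.ofReal p) μ →
      eLpNorm (fun x ↦ ∫ y, f y / ‖x - y‖ ^ γ ∂μ) (ENNReal.ofReal q) μ ≤
        C * eLpNorm f (ENNReal.ofReal p) μ := by
  have hp₀ : 0 < p := by linarith
  obtain ⟨C, hC, hHLS⟩ := lintegral_rpow_lintegral_mul_rpow_neg_le (μ := μ) hγd hp hq hpq
  refine ⟨C ^ (1 / q), ENNReal.rpow_ne_top_of_nonneg (by positivity) hC, fun f hf ↦ ?_⟩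
  set g : E → ℝ≥0∞ := fun y ↦ ‖hf.1.mk f y‖ₑ
  have hnorm : eLpNorm f (ENNReal.ofReal p) μ = (∫⁻ y, g y ^ p ∂μ) ^ (1 / p) := by
    rw [eLpNorm_eq_lintegral_rpow_enorm_toReal (by simpa using hp₀) ENNReal.ofReal_ne_top,
      ENNReal.toReal_ofReal hp₀.le]
    exact congrArg (· ^ (1 / p))
      (lintegral_congr_ae (hf.1.ae_eq_mk.mono fun y hy ↦ by simp [g, hy]))
  have hgp : ∫⁻ y, g y ^ p ∂μ ≠ ∞ := by
    have := hf.2.ne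
    rwa [hnorm, Ne, ENNReal.rpow_eq_top_iff_of_pos (by positivity)] at this
  calc eLpNorm (fun x ↦ ∫ y, f y / ‖x - y‖ ^ γ ∂μ) (ENNReal.ofReal q) μ
      ≤ (∫⁻ x, (∫⁻ y, g y * ‖x - y‖ₑ ^ (-γ) ∂μ) ^ q ∂μ) ^ (1 / q) := by
        rw [eLpNorm_eq_lintegral_rpow_enorm_toReal (by simpa using hq) ENNReal.ofReal_ne_top,
          ENNReal.toReal_ofReal hq.le]
        refine ENNReal.rpow_le_rpow (lintegral_mono fun x ↦ ENNReal.rpow_le_rpow ?_ hq.le)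
          (by positivity)
        refine (enorm_integral_le_lintegral_enorm _).trans (lintegral_mono_ae ?_)
        filter_upwards [hf.1.ae_eq_mk] with y hy
        rw [show g y = ‖f y‖ₑ by simp [g, hy]]
        exact enorm_div_norm_rpow_le _ _ _
    _ ≤ (C * (∫⁻ y, g y ^ p ∂μ) ^ (q / p)) ^ (1 / q) :=
        ENNReal.rpow_le_rpow (hHLS g hf.1.stronglyMeasurable_mk.measurable.enorm hgp)
          (by positivity)
    _ = C ^ (1 / q) * eLpNorm f (ENNReal.ofReal p) μ := by
        rw [ENNReal.mul_rpow_of_nonneg _ _ (by positivity), ← ENNReal.rpow_mul, hnorm,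
          show q / p * (1 / q) = 1 / p by field_simp]

end HaarMeasure

theorem hls_convolution (p q : ℝ) (hp : 1 < p) (hq : 1 < q)
    (hpq : 1 / p + 1 / 3 = 1 + 1 / q) :
    ∃ N : ℝ, 0 < N ∧ ∀ f : E3 → ℝ, MemLp f (ENNReal.ofReal p) volume →
      eLpNorm (fun x : E3 => ∫ y : E3, f y / ‖x - y‖) (ENNReal.ofReal q) volume
        ≤ ENNReal.ofReal N * eLpNorm f (ENNReal.ofReal p) volume := by
  obtain ⟨C, hC, hHLS⟩ := eLpNorm_integral_div_norm_rpow_le (μ := (volume : Measure E3))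
    (γ := 1) (p := p) (q := q) (by simp) hp (by linarith) (by simpa using hpq)
  refine ⟨C.toReal + 1, by positivity, fun f hf ↦ ?_⟩
  simp only [Real.rpow_one] at hHLS
  refine (hHLS f hf).trans (mul_le_mul_left ?_ _)
  exact (ENNReal.le_ofReal_iff_toReal_le hC (by positivity)).mpr (by linarith)
end
end

section
/- Define D(u) = ∫_{ℝ³}∫_{ℝ³} |u(x)|² |u(y)|² / |x − y| dx dy for u: ℝ³ → ℂ. There exists a constant C > 0 such that D(u) ≤ C ‖u‖_{L^{12/5}(ℝ³)}⁴ for every u ∈ L^{12/5}(ℝ³, ℂ). -/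
/-!
The inequality is the case `f = |u|²`, `p = 6/5` of a Hardy–Littlewood–Sobolev bound proved by
level sets. In dimension `d ≥ 2` the Coulomb kernel satisfies `∫_A |x - y|⁻¹ dy ≤ c |A|^θ` with
`θ = (d - 1)/d`: split `A` along the ball around `x` of radius `|A|^(1/d)`. For any symmetric kernel
with this property and `p (1 + θ) = 2`, symmetry lets one integrate only over `f y ≤ f x`. There
the layer-cake formula in `y` and Chebyshev's bound `|{f > t}| ≤ t^(-p) ∫ f^p` give
`∫_{f y ≤ f x} f y K x y dy ≤ c (∫ f^p)^θ f(x)^(p-1) / (p - 1)`, and integrating against `f x`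
yields `(2 / (p - 1)) c (∫ f^p)^(1+θ)`; for `f = |u|²` this is a multiple of `‖u‖_{12/5}^4`.
-/

open MeasureTheory

noncomputable section

local notation "E3" => EuclideanSpace ℝ (Fin 3)

/-- The Coulomb (Hartree) energy functional. -/
def coulombEnergy (u : E3 → ℂ) : ℝ :=
  ∫ x : E3, ∫ y : E3, ‖u x‖ ^ 2 * ‖u y‖ ^ 2 / ‖x - y‖

open Metric Module Set
open scoped ENNReal

section HardyLittlewoodSobolev

theorem lintegral_Ioo_zero_ofReal_rpow {s σ : ℝ} (hs : -1 < s) (hσ : 0 ≤ σ) :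
    ∫⁻ t in Ioo 0 σ, ENNReal.ofReal (t ^ s) = ENNReal.ofReal (σ ^ (s + 1) / (s + 1)) := by
  have hint : IntegrableOn (fun t : ℝ ↦ t ^ s) (Ioo 0 σ) := by
    rcases hσ.eq_or_lt with rfl | hσ
    · simp
    · exact (intervalIntegral.integrableOn_Ioo_rpow_iff hσ).2 hs
  rw [← ofReal_integral_eq_lintegral_ofReal hint
    ((ae_restrict_iff' measurableSet_Ioo).2 (ae_of_all _ fun t ht ↦ Real.rpow_nonneg ht.1.le s)),
    ← integral_Ioc_eq_integral_Ioo, ← intervalIntegral.integral_of_le hσ, integral_rpow (.inl hs),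
    Real.zero_rpow (by linarith), sub_zero]

variable {α : Type*} [MeasurableSpace α] {μ : Measure α}

theorem meas_lt_le_ofReal_rpow_neg_mul_lintegral {f : α → ℝ} (hf : Measurable f) {p t : ℝ}
    (hp : 0 ≤ p) (ht : 0 < t) :
    μ {a | t < f a} ≤ ENNReal.ofReal (t ^ (-p)) * ∫⁻ a, ENNReal.ofReal (f a ^ p) ∂μ := by
  have htp : 0 < t ^ p := by positivity
  have hsub : {a | t < f a} ⊆ {a | ENNReal.ofReal (t ^ p) ≤ ENNReal.ofReal (f a ^ p)} :=
    fun a ha ↦ ENNReal.ofReal_le_ofReal (Real.rpow_le_rpow ht.le (le_of_lt ha) hp)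
  rw [Real.rpow_neg ht.le, ENNReal.ofReal_inv_of_pos htp, ← ENNReal.div_eq_inv_mul,
    ENNReal.le_div_iff_mul_le (by simp [htp]) (by simp), mul_comm]
  exact (mul_le_mul_right (measure_mono hsub) _).trans
    (mul_meas_ge_le_lintegral₀ (hf.pow_const p).ennreal_ofReal.aemeasurable _)

theorem setLIntegral_sublevel_ofReal_mul_le {f : α → ℝ} (hf : Measurable f) (hf0 : 0 ≤ f)
    {k : α → ℝ≥0∞} (hk : Measurable k) {c : ℝ≥0∞} {p θ σ : ℝ} (hθ : 0 ≤ θ) (hp : 1 < p)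
    (hpθ : p * (1 + θ) = 2) (hσ : 0 ≤ σ) (hkA : ∀ A, ∫⁻ y in A, k y ∂μ ≤ c * μ A ^ θ) :
    ∫⁻ y in {y | f y ≤ σ}, ENNReal.ofReal (f y) * k y ∂μ
      ≤ c * (∫⁻ y, ENNReal.ofReal (f y ^ p) ∂μ) ^ θ * ENNReal.ofReal (σ ^ (p - 1) / (p - 1)) := by
  set M := ∫⁻ y, ENNReal.ofReal (f y ^ p) ∂μ
  set ν := (μ.restrict {y | f y ≤ σ}).withDensity k
  have hlayer : ∫⁻ y in {y | f y ≤ σ}, ENNReal.ofReal (f y) * k y ∂μ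
      = ∫⁻ t in Ioi 0, ν {y | t < f y} := by
    rw [← lintegral_eq_lintegral_meas_lt ν (ae_of_all _ hf0) hf.aemeasurable,
      lintegral_withDensity_eq_lintegral_mul₀ hk.aemeasurable hf.ennreal_ofReal.aemeasurable]
    simp only [Pi.mul_apply, mul_comm]
  have hlevel : ∀ t ∈ Ioi (0 : ℝ), ν {y | t < f y}
      ≤ (Iio σ).indicator (fun t ↦ c * M ^ θ * ENNReal.ofReal (t ^ (p - 2))) t := by
    intro t (ht : 0 < t)
    rw [withDensity_apply _ (measurableSet_lt measurable_const hf),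
      Measure.restrict_restrict (measurableSet_lt measurable_const hf)]
    by_cases htσ : t < σ
    · rw [indicator_of_mem (show t ∈ Iio σ from htσ)]
      calc ∫⁻ y in {y | t < f y} ∩ {y | f y ≤ σ}, k y ∂μ
          ≤ c * μ ({y | t < f y} ∩ {y | f y ≤ σ}) ^ θ := hkA _
        _ ≤ c * (ENNReal.ofReal (t ^ (-p)) * M) ^ θ := by
          gcongr
          exact (measure_mono inter_subset_left).trans
            (meas_lt_le_ofReal_rpow_neg_mul_lintegral hf (by linarith) ht)
        _ = c * M ^ θ * ENNReal.ofReal (t ^ (p - 2)) := by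
          rw [ENNReal.mul_rpow_of_nonneg _ _ hθ, ENNReal.ofReal_rpow_of_pos (by positivity),
            ← Real.rpow_mul ht.le, show -p * θ = p - 2 by linarith]
          ring
    · have hempty : {y | t < f y} ∩ {y | f y ≤ σ} = ∅ :=
        eq_empty_of_forall_notMem fun y hy ↦ htσ (hy.1.trans_le hy.2)
      simp [hempty]
  calc ∫⁻ y in {y | f y ≤ σ}, ENNReal.ofReal (f y) * k y ∂μ
      = ∫⁻ t in Ioi 0, ν {y | t < f y} := hlayer
    _ ≤ ∫⁻ t in Ioi 0, (Iio σ).indicator (fun t ↦ c * M ^ θ * ENNReal.ofReal (t ^ (p - 2))) t :=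
        setLIntegral_mono' measurableSet_Ioi hlevel
    _ = c * M ^ θ * ∫⁻ t in Ioo 0 σ, ENNReal.ofReal (t ^ (p - 2)) := by
        rw [lintegral_indicator measurableSet_Iio, Measure.restrict_restrict measurableSet_Iio,
          Iio_inter_Ioi, lintegral_const_mul _ (by fun_prop)]
    _ = c * M ^ θ * ENNReal.ofReal (σ ^ (p - 1) / (p - 1)) := by
        rw [lintegral_Ioo_zero_ofReal_rpow (by linarith) hσ]
        ring_nf

theorem lintegral_lintegral_le_two_mul_setLIntegral_sublevel [SFinite μ] {F : α → α → ℝ≥0∞}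
    (hF : Measurable (Function.uncurry F)) (hsymm : ∀ x y, F x y = F y x) {g : α → ℝ}
    (hg : Measurable g) :
    ∫⁻ x, ∫⁻ y, F x y ∂μ ∂μ ≤ 2 * ∫⁻ x, ∫⁻ y in {y | g y ≤ g x}, F x y ∂μ ∂μ := by
  set H : α → α → ℝ≥0∞ := fun x y ↦ if g y ≤ g x then F x y else 0
  have hH : Measurable (Function.uncurry H) :=
    Measurable.ite (measurableSet_le (hg.comp measurable_snd) (hg.comp measurable_fst)) hF
      measurable_const
  have hcover : ∀ x y, F x y ≤ H x y + H y x := by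
    intro x y
    rcases le_total (g y) (g x) with h | h
    · simp [H, h]
    · simp [H, h, hsymm x y]
  have hswap : ∫⁻ x, ∫⁻ y, H y x ∂μ ∂μ = ∫⁻ x, ∫⁻ y, H x y ∂μ ∂μ :=
    lintegral_lintegral_swap (hH.comp measurable_swap).aemeasurable
  have hsublevel : ∀ x, ∫⁻ y, H x y ∂μ = ∫⁻ y in {y | g y ≤ g x}, F x y ∂μ := fun x ↦ by
    rw [← lintegral_indicator (measurableSet_le hg measurable_const)]
    rfl
  calc ∫⁻ x, ∫⁻ y, F x y ∂μ ∂μ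
      ≤ ∫⁻ x, ∫⁻ y, (H x y + H y x) ∂μ ∂μ :=
        lintegral_mono fun x ↦ lintegral_mono fun y ↦ hcover x y
    _ = ∫⁻ x, ∫⁻ y, H x y ∂μ ∂μ + ∫⁻ x, ∫⁻ y, H y x ∂μ ∂μ := by
        have hinner : Measurable fun x ↦ ∫⁻ y, H x y ∂μ := hH.lintegral_prod_right'
        rw [← lintegral_add_left hinner]
        exact lintegral_congr fun x ↦ lintegral_add_left (hH.comp measurable_prodMk_left) _
    _ = 2 * ∫⁻ x, ∫⁻ y in {y | g y ≤ g x}, F x y ∂μ ∂μ := by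
        rw [hswap, ← two_mul]
        simp only [hsublevel]

theorem lintegral_lintegral_ofReal_mul_le_of_setLIntegral_le [SFinite μ] {K : α → α → ℝ≥0∞}
    (hK : Measurable (Function.uncurry K)) (hKsymm : ∀ x y, K x y = K y x) {c : ℝ≥0∞}
    {p θ : ℝ} (hθ : 0 ≤ θ) (hp : 1 < p) (hpθ : p * (1 + θ) = 2)
    (hKA : ∀ x A, ∫⁻ y in A, K x y ∂μ ≤ c * μ A ^ θ) {f : α → ℝ} (hf : Measurable f)
    (hf0 : 0 ≤ f) :
    ∫⁻ x, ∫⁻ y, ENNReal.ofReal (f x) * ENNReal.ofReal (f y) * K x y ∂μ ∂μ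
      ≤ ENNReal.ofReal (2 / (p - 1)) * c * (∫⁻ x, ENNReal.ofReal (f x ^ p) ∂μ) ^ (1 + θ) := by
  set M := ∫⁻ x, ENNReal.ofReal (f x ^ p) ∂μ
  have hsymmetrize := lintegral_lintegral_le_two_mul_setLIntegral_sublevel (μ := μ)
    (F := fun x y ↦ ENNReal.ofReal (f x) * ENNReal.ofReal (f y) * K x y) (by fun_prop)
    (fun x y ↦ by rw [hKsymm]; ring) hf
  have hpow : ∀ x, ENNReal.ofReal (f x) * ENNReal.ofReal (f x ^ (p - 1) / (p - 1))
      = ENNReal.ofReal (p - 1)⁻¹ * ENNReal.ofReal (f x ^ p) := by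
    intro x
    have hsucc : f x ^ p = f x * f x ^ (p - 1) := by
      rw [← Real.rpow_one_add' (hf0 x) (by linarith), add_sub_cancel]
    rw [← ENNReal.ofReal_mul (hf0 x), ← ENNReal.ofReal_mul (inv_nonneg.2 (by linarith)), hsucc]
    ring_nf
  calc ∫⁻ x, ∫⁻ y, ENNReal.ofReal (f x) * ENNReal.ofReal (f y) * K x y ∂μ ∂μ
      ≤ 2 * ∫⁻ x, ∫⁻ y in {y | f y ≤ f x},
          ENNReal.ofReal (f x) * ENNReal.ofReal (f y) * K x y ∂μ ∂μ := hsymmetrize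
    _ = 2 * ∫⁻ x, ENNReal.ofReal (f x) * ∫⁻ y in {y | f y ≤ f x},
          ENNReal.ofReal (f y) * K x y ∂μ ∂μ := by
        simp only [mul_assoc, lintegral_const_mul' _ _ ENNReal.ofReal_ne_top]
    _ ≤ 2 * ∫⁻ x, ENNReal.ofReal (f x)
          * (c * M ^ θ * ENNReal.ofReal (f x ^ (p - 1) / (p - 1))) ∂μ := by
        gcongr with x
        exact setLIntegral_sublevel_ofReal_mul_le hf hf0 (hK.comp measurable_prodMk_left) hθ hp
          hpθ (hf0 x) (hKA x)
    _ = 2 * ∫⁻ x, c * M ^ θ * ENNReal.ofReal (p - 1)⁻¹ * ENNReal.ofReal (f x ^ p) ∂μ := by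
        congr 1
        refine lintegral_congr fun x ↦ ?_
        rw [mul_assoc _ (ENNReal.ofReal _), ← hpow]
        ring
    _ = ENNReal.ofReal (2 / (p - 1)) * c * M ^ (1 + θ) := by
        rw [lintegral_const_mul _ (hf.pow_const p).ennreal_ofReal,
          ENNReal.rpow_add_of_nonneg _ _ zero_le_one hθ, ENNReal.rpow_one, div_eq_mul_inv,
          ENNReal.ofReal_mul zero_le_two, ENNReal.ofReal_ofNat]
        ring

end HardyLittlewoodSobolev

section Kernel

variable {E : Type*} [NormedAddCommGroup E] [MeasurableSpace E] [BorelSpace E] (μ : Measure E)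

theorem setLIntegral_ball_inv_edist [μ.IsAddLeftInvariant] (x : E) (r : ℝ) :
    ∫⁻ y in ball x r, (edist x y)⁻¹ ∂μ = ∫⁻ z in ball (0 : E) r, ‖z‖ₑ⁻¹ ∂μ := by
  rw [← lintegral_indicator measurableSet_ball, ← lintegral_indicator measurableSet_ball,
    ← lintegral_add_left_eq_self _ x]
  congr 1 with z
  by_cases hz : z ∈ ball (0 : E) r
  · have hxz : x + z ∈ ball x r := by simpa using hz
    simp [hz, hxz, edist_eq_enorm_sub]
  · have hxz : x + z ∉ ball x r := by simpa using hz
    simp [hz, hxz]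

variable [NormedSpace ℝ E] [FiniteDimensional ℝ E] [μ.IsAddHaarMeasure]

theorem lintegral_eq_ofReal_pow_finrank_mul_lintegral_comp_smul (f : E → ℝ≥0∞) {r : ℝ}
    (hr : 0 < r) :
    ∫⁻ y, f y ∂μ = ENNReal.ofReal (r ^ finrank ℝ E) * ∫⁻ z, f (r • z) ∂μ := by
  have hmap : Measure.map (r • ·) μ = ENNReal.ofReal (r ^ finrank ℝ E)⁻¹ • μ := by
    rw [μ.map_addHaar_smul hr.ne', abs_of_pos (by positivity)]
  have hchange :=
    lintegral_map_equiv (μ := μ) f (Homeomorph.smulOfNeZero r hr.ne').toMeasurableEquiv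
  change ∫⁻ y, f y ∂(Measure.map (r • ·) μ) = ∫⁻ z, f (r • z) ∂μ at hchange
  rw [← hchange, hmap, lintegral_smul_measure, smul_eq_mul, ← mul_assoc,
    ← ENNReal.ofReal_mul (by positivity), mul_inv_cancel₀ (by positivity), ENNReal.ofReal_one,
    one_mul]

theorem setLIntegral_ball_inv_enorm {r : ℝ} (hr : 0 < r) :
    ∫⁻ y in ball (0 : E) r, ‖y‖ₑ⁻¹ ∂μ
      = ENNReal.ofReal (r ^ ((finrank ℝ E : ℝ) - 1)) * ∫⁻ z in ball (0 : E) 1, ‖z‖ₑ⁻¹ ∂μ := by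
  have hscale : ∀ z : E, (ball (0 : E) r).indicator (‖·‖ₑ⁻¹) (r • z)
      = (ENNReal.ofReal r)⁻¹ * (ball (0 : E) 1).indicator (‖·‖ₑ⁻¹) z := by
    intro z
    have hmem : r • z ∈ ball (0 : E) r ↔ z ∈ ball (0 : E) 1 := by
      simp [norm_smul, abs_of_pos hr, hr]
    by_cases hz : z ∈ ball (0 : E) 1
    · rw [Set.indicator_of_mem (hmem.2 hz), Set.indicator_of_mem hz, enorm_smul,
        Real.enorm_of_nonneg hr.le, ENNReal.mul_inv (by simp [hr]) (by simp)]
    · rw [Set.indicator_of_notMem (mt hmem.1 hz), Set.indicator_of_notMem hz, mul_zero]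
  rw [← lintegral_indicator measurableSet_ball,
    lintegral_eq_ofReal_pow_finrank_mul_lintegral_comp_smul μ _ hr, funext hscale,
    lintegral_const_mul' _ _ (by simp [hr]), lintegral_indicator measurableSet_ball, ← mul_assoc,
    ← ENNReal.ofReal_inv_of_pos hr, ← ENNReal.ofReal_mul (by positivity),
    Real.rpow_sub hr, Real.rpow_one, Real.rpow_natCast, div_eq_mul_inv]

theorem setLIntegral_ball_inv_enorm_lt_top (hd : 2 ≤ finrank ℝ E) :
    ∫⁻ z in ball (0 : E) 1, ‖z‖ₑ⁻¹ ∂μ < ⊤ := by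
  have : Nontrivial E := Module.nontrivial_of_finrank_pos (R := ℝ) (by omega)
  have hint : IntegrableOn (fun z : E ↦ ‖z‖⁻¹) (ball 0 1) μ :=
    integrableOn_ball_of_norm_le_rpow (by omega) (C := 1) (α := 1) (by exact_mod_cast hd)
      (ae_of_all _ fun z ↦ by simp [Real.rpow_neg_one]) (by fun_prop)
  refine lt_of_le_of_lt (le_of_eq (setLIntegral_congr_fun_ae measurableSet_ball ?_)) hint.2
  filter_upwards [μ.ae_ne 0] with z hz _
  simp [enorm_inv (norm_ne_zero_iff.2 hz)]

theorem setLIntegral_inv_edist_le (hd : 2 ≤ finrank ℝ E) (x : E) (A : Set E) :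
    ∫⁻ y in A, (edist x y)⁻¹ ∂μ ≤ (∫⁻ z in ball (0 : E) 1, ‖z‖ₑ⁻¹ ∂μ + 1)
      * μ A ^ (((finrank ℝ E : ℝ) - 1) / finrank ℝ E) := by
  have hd' : (2 : ℝ) ≤ finrank ℝ E := by exact_mod_cast hd
  set d : ℝ := (finrank ℝ E : ℝ)
  rcases eq_or_ne (μ A) 0 with hA0 | hA0
  · simp [Measure.restrict_eq_zero.2 hA0]
  rcases eq_or_ne (μ A) ⊤ with hAtop | hAtop
  · rw [hAtop, ENNReal.top_rpow_of_pos (by apply div_pos <;> linarith),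
      ENNReal.mul_top (by simp)]
    exact le_top
  set a := (μ A).toReal
  have ha : 0 < a := ENNReal.toReal_pos hA0 hAtop
  have hμA : μ A = ENNReal.ofReal a := (ENNReal.ofReal_toReal hAtop).symm
  set r := a ^ d⁻¹
  have hr : 0 < r := by positivity
  have hball : r ^ (d - 1) = a ^ ((d - 1) / d) := by
    rw [← Real.rpow_mul ha.le, inv_mul_eq_div]
  have hfar : r⁻¹ * a = a ^ ((d - 1) / d) := by
    rw [← Real.rpow_neg ha.le, ← Real.rpow_add_one ha.ne']
    congr 1
    field_simp
    ring
  calc ∫⁻ y in A, (edist x y)⁻¹ ∂μ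
      ≤ (∫⁻ y in ball x r, (edist x y)⁻¹ ∂μ) + ∫⁻ y in A \ ball x r, (edist x y)⁻¹ ∂μ := by
        refine (lintegral_mono_set ?_).trans (lintegral_union_le _ _ _)
        intro y hy
        by_cases h : y ∈ ball x r
        exacts [Or.inl h, Or.inr ⟨hy, h⟩]
    _ ≤ ENNReal.ofReal (r ^ (d - 1)) * ∫⁻ z in ball (0 : E) 1, ‖z‖ₑ⁻¹ ∂μ
          + ENNReal.ofReal r⁻¹ * μ A := by
        rw [setLIntegral_ball_inv_edist, setLIntegral_ball_inv_enorm μ hr]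
        gcongr
        calc ∫⁻ y in A \ ball x r, (edist x y)⁻¹ ∂μ
            ≤ ∫⁻ _ in A \ ball x r, ENNReal.ofReal r⁻¹ ∂μ := by
              refine setLIntegral_mono measurable_const fun y hy ↦ ?_
              rw [ENNReal.ofReal_inv_of_pos hr, edist_dist]
              gcongr
              simpa [dist_comm] using hy.2
          _ ≤ ENNReal.ofReal r⁻¹ * μ A := by
              rw [setLIntegral_const]
              gcongr
              exact Set.sdiff_subset
    _ = (∫⁻ z in ball (0 : E) 1, ‖z‖ₑ⁻¹ ∂μ + 1) * μ A ^ ((d - 1) / d) := by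
        rw [hμA, ← ENNReal.ofReal_mul (by positivity), hfar, hball,
          ENNReal.ofReal_rpow_of_pos ha]
        ring

theorem lintegral_lintegral_ofReal_mul_inv_edist_le (hd : 2 ≤ finrank ℝ E) {f : E → ℝ}
    (hf : Measurable f) (hf0 : 0 ≤ f) :
    ∫⁻ x, ∫⁻ y, ENNReal.ofReal (f x) * ENNReal.ofReal (f y) * (edist x y)⁻¹ ∂μ ∂μ
      ≤ ENNReal.ofReal (2 * (2 * finrank ℝ E - 1)) * (∫⁻ z in ball (0 : E) 1, ‖z‖ₑ⁻¹ ∂μ + 1)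
        * (∫⁻ x, ENNReal.ofReal (f x ^ (2 * finrank ℝ E / (2 * finrank ℝ E - 1 : ℝ))) ∂μ)
          ^ ((2 * finrank ℝ E - 1) / finrank ℝ E : ℝ) := by
  have hd' : (2 : ℝ) ≤ finrank ℝ E := by exact_mod_cast hd
  have h2d : (2 * finrank ℝ E - 1 : ℝ) ≠ 0 := by linarith
  have hHLS := lintegral_lintegral_ofReal_mul_le_of_setLIntegral_le (μ := μ)
    (K := fun x y ↦ (edist x y)⁻¹) measurable_edist.inv (fun x y ↦ by rw [edist_comm])
    (θ := ((finrank ℝ E : ℝ) - 1) / finrank ℝ E) (p := 2 * finrank ℝ E / (2 * finrank ℝ E - 1))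
    (div_nonneg (by linarith) (by linarith)) (by rw [lt_div_iff₀ (by linarith)]; linarith)
    (by field_simp; ring)
    (setLIntegral_inv_edist_le μ hd) hf hf0
  convert hHLS using 3
  · congr 1
    field_simp
    ring
  · field_simp
    ring

end Kernel

theorem coulombEnergy_congr_ae {u v : E3 → ℂ} (huv : u =ᵐ[volume] v) :
    coulombEnergy u = coulombEnergy v := by
  refine integral_congr_ae ?_
  filter_upwards [huv] with x hx
  refine integral_congr_ae ?_
  filter_upwards [huv] with y hy
  rw [hx, hy]

/-- No integrability is needed: a Bochner integral of a non-integrable function is `0`. -/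
theorem ofReal_coulombEnergy_le_lintegral (u : E3 → ℂ) :
    ENNReal.ofReal (coulombEnergy u) ≤ ∫⁻ x, ∫⁻ y,
      ENNReal.ofReal (‖u x‖ ^ 2) * ENNReal.ofReal (‖u y‖ ^ 2) * (edist x y)⁻¹ := by
  have hpt : ∀ x y : E3, ‖‖u x‖ ^ 2 * ‖u y‖ ^ 2 / ‖x - y‖‖ₑ
      ≤ ENNReal.ofReal (‖u x‖ ^ 2) * ENNReal.ofReal (‖u y‖ ^ 2) * (edist x y)⁻¹ := by
    intro x y
    rw [Real.enorm_of_nonneg (by positivity)]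
    rcases eq_or_lt_of_le (norm_nonneg (x - y)) with h0 | h0
    · simp [← h0]
    · rw [div_eq_mul_inv, ENNReal.ofReal_mul (by positivity), ENNReal.ofReal_mul (by positivity),
        ENNReal.ofReal_inv_of_pos h0, edist_dist, dist_eq_norm]
  calc ENNReal.ofReal (coulombEnergy u)
      = ‖coulombEnergy u‖ₑ :=
        (Real.enorm_of_nonneg (integral_nonneg fun x ↦ integral_nonneg fun y ↦ by positivity)).symm
    _ ≤ ∫⁻ x, ‖∫ y, ‖u x‖ ^ 2 * ‖u y‖ ^ 2 / ‖x - y‖‖ₑ := enorm_integral_le_lintegral_enorm _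
    _ ≤ ∫⁻ x, ∫⁻ y, ‖‖u x‖ ^ 2 * ‖u y‖ ^ 2 / ‖x - y‖‖ₑ :=
        lintegral_mono fun x ↦ enorm_integral_le_lintegral_enorm _
    _ ≤ _ := lintegral_mono fun x ↦ lintegral_mono fun y ↦ hpt x y

theorem ofReal_coulombEnergy_le {u : E3 → ℂ} (hu : Measurable u) :
    ENNReal.ofReal (coulombEnergy u) ≤ 10 * ((∫⁻ z in ball (0 : E3) 1, ‖z‖ₑ⁻¹) + 1)
      * eLpNorm u (ENNReal.ofReal (12 / 5)) volume ^ 4 := by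
  have hdim : finrank ℝ E3 = 3 := finrank_euclideanSpace_fin
  have hM : ∫⁻ x, ENNReal.ofReal ((‖u x‖ ^ 2) ^ (6 / 5 : ℝ)) = ∫⁻ x, ‖u x‖ₑ ^ (12 / 5 : ℝ) := by
    refine lintegral_congr fun x ↦ ?_
    rw [← Real.rpow_natCast, ← Real.rpow_mul (norm_nonneg _), ← ofReal_norm,
      ENNReal.ofReal_rpow_of_nonneg (norm_nonneg _) (by norm_num)]
    norm_num
  have hLp : eLpNorm u (ENNReal.ofReal (12 / 5)) volume ^ 4
      = (∫⁻ x, ‖u x‖ₑ ^ (12 / 5 : ℝ)) ^ (5 / 3 : ℝ) := by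
    rw [eLpNorm_eq_lintegral_rpow_enorm_toReal (by norm_num) ENNReal.ofReal_ne_top,
      ENNReal.toReal_ofReal (by norm_num), ← ENNReal.rpow_natCast, ← ENNReal.rpow_mul]
    norm_num
  calc ENNReal.ofReal (coulombEnergy u)
      ≤ ∫⁻ x, ∫⁻ y, ENNReal.ofReal (‖u x‖ ^ 2) * ENNReal.ofReal (‖u y‖ ^ 2) * (edist x y)⁻¹ :=
        ofReal_coulombEnergy_le_lintegral u
    _ ≤ ENNReal.ofReal (2 * (2 * 3 - 1)) * ((∫⁻ z in ball (0 : E3) 1, ‖z‖ₑ⁻¹) + 1)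
          * (∫⁻ x, ENNReal.ofReal ((‖u x‖ ^ 2) ^ (2 * 3 / (2 * 3 - 1) : ℝ)))
            ^ ((2 * 3 - 1) / 3 : ℝ) := by
        simpa only [hdim, Nat.cast_ofNat] using lintegral_lintegral_ofReal_mul_inv_edist_le volume
          (by simp [hdim]) (hu.norm.pow_const 2) (fun x ↦ by positivity)
    _ = 10 * ((∫⁻ z in ball (0 : E3) 1, ‖z‖ₑ⁻¹) + 1)
          * (∫⁻ x, ENNReal.ofReal ((‖u x‖ ^ 2) ^ (6 / 5 : ℝ))) ^ (5 / 3 : ℝ) := by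
        norm_num
    _ = _ := by rw [hM, hLp]

theorem coulombEnergy_le :
    ∃ C : ℝ, 0 < C ∧ ∀ u : E3 → ℂ, MemLp u (ENNReal.ofReal (12 / 5)) volume →
      coulombEnergy u ≤ C * (eLpNorm u (ENNReal.ofReal (12 / 5)) volume).toReal ^ 4 := by
  have hκ := (setLIntegral_ball_inv_enorm_lt_top (volume : Measure E3) (by simp)).ne
  refine ⟨(10 * ((∫⁻ z in ball (0 : E3) 1, ‖z‖ₑ⁻¹) + 1)).toReal,
    ENNReal.toReal_pos (by simp) (by finiteness), fun u hu ↦ ?_⟩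
  obtain ⟨v, hv, huv⟩ := hu.1
  have hvLp : eLpNorm v (ENNReal.ofReal (12 / 5)) volume ≠ ⊤ :=
    (eLpNorm_congr_ae huv ▸ hu.2).ne
  rw [coulombEnergy_congr_ae huv, eLpNorm_congr_ae huv, ← ENNReal.toReal_pow,
    ← ENNReal.toReal_mul]
  exact (ENNReal.ofReal_le_iff_le_toReal (by finiteness)).1 (ofReal_coulombEnergy_le hv.measurable)
end
end
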